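/- Let (S, Σ) be a measurable space and κ a Markov kernel from S to S. If there exists an irreducibility measure φ for κ, then there exists a measure ψ on (S, Σ) such that: (1) ψ is an irreducibility measure for κ; (2) a measure μ on (S, Σ) is an irreducibility measure for κ if and only if μ is absolutely continuous with respect to ψ; and (3) for every measurable set A with ψ(A) = 0, the set {x ∈ S : ∃ n ≥ 1, κⁿ(x, A) > 0} has ψ-measure zero. -/

import Mathlib

open MeasureTheory ProbabilityTheory

/-- The n-fold composition of a kernel with itself (n-step transition kernel);
`kpow κ 0` is the identity kernel and `kpow κ (n+1) = κ ∘ₖ kpow κ n`. -/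
noncomputable def kpow {S : Type*} [MeasurableSpace S] (κ : Kernel S S) : ℕ → Kernel S S
  | 0 => Kernel.id
  | n + 1 => κ ∘ₖ kpow κ n

/-- A measure `φ` is an irreducibility measure for the kernel `κ` if for every
measurable set `A` with `φ A > 0` and every `x`, there is `n ≥ 1` with `κⁿ(x, A) > 0`. -/
def IsIrreducibilityMeasure {S : Type*} [MeasurableSpace S] (κ : Kernel S S)
    (φ : Measure S) : Prop :=
  ∀ A : Set S, MeasurableSet A → 0 < φ A → ∀ x : S, ∃ n : ℕ, 1 ≤ n ∧ 0 < kpow κ n x A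

/-! Take a nonzero irreducibility measure `φ` (if there is none, `ψ = 0` works) and let
`ψ = ∑ₙ φ κⁿ`. A set is `ψ`-null exactly when `φ`-almost no point ever reaches it. Since `φ` is
irreducible, every point reaches the set of points reaching a `ψ`-positive set, so `ψ` is
irreducible. Conversely a `ψ`-null set `A` is missed by some point `x`, which rules out `A` having
positive mass for any irreducibility measure, and rules out the points reaching `A` having
positive `ψ`-mass, since `x` would reach them. -/

section

variable {S : Type*} [MeasurableSpace S] (κ : Kernel S S)

lemma kpow_add (m n : ℕ) : kpow κ (m + n) = kpow κ m ∘ₖ kpow κ n := by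
  induction m with
  | zero => simp [kpow]
  | succ m ih => rw [Nat.add_right_comm, kpow, kpow, ih, Kernel.comp_assoc]

def reachSet (A : Set S) : Set S := {x | ∃ n, 0 < kpow κ n x A}

variable {κ}

lemma measurableSet_reachSet {A : Set S} (hA : MeasurableSet A) :
    MeasurableSet (reachSet κ A) := by
  rw [reachSet, Set.ofPred_exists]
  exact .iUnion fun n => measurableSet_lt measurable_const (Kernel.measurable_coe _ hA)

lemma exists_kpow_add_pos {A : Set S} (hA : MeasurableSet A) {x : S} {m : ℕ}
    (h : 0 < kpow κ m x (reachSet κ A)) : ∃ n, 0 < kpow κ (n + m) x A := by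
  rw [reachSet, Set.ofPred_exists, pos_iff_ne_zero, Ne, measure_iUnion_null_iff] at h
  push Not at h
  obtain ⟨n, hn⟩ := h
  refine ⟨n, ?_⟩
  rw [kpow_add, Kernel.comp_apply' _ _ _ hA,
    lintegral_pos_iff_support (Kernel.measurable_coe _ hA)]
  simpa [Function.support, pos_iff_ne_zero] using pos_iff_ne_zero.2 hn

variable (κ) in
noncomputable def potentialMeasure (φ : Measure S) : Measure S :=
  Measure.sum fun n => kpow κ n ∘ₘ φ

lemma potentialMeasure_apply_eq_zero_iff {φ : Measure S} {A : Set S} (hA : MeasurableSet A) :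
    potentialMeasure κ φ A = 0 ↔ φ (reachSet κ A) = 0 := by
  rw [potentialMeasure, Measure.sum_apply _ hA, ENNReal.tsum_eq_zero, reachSet,
    Set.ofPred_exists, measure_iUnion_null_iff]
  refine forall_congr' fun n => ?_
  rw [Measure.bind_apply hA (Kernel.aemeasurable _),
    lintegral_eq_zero_iff (Kernel.measurable_coe _ hA), Filter.EventuallyEq, ae_iff]
  simp [pos_iff_ne_zero]

lemma exists_notMem_reachSet_of_potentialMeasure_eq_zero {φ : Measure S} (hφ : φ ≠ 0)
    {A : Set S} (hA : MeasurableSet A) (h : potentialMeasure κ φ A = 0) :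
    ∃ x, x ∉ reachSet κ A := by
  rw [potentialMeasure_apply_eq_zero_iff hA] at h
  by_contra! hall
  exact hφ (Measure.measure_univ_eq_zero.1 (Set.eq_univ_of_forall hall ▸ h))

lemma isIrreducibilityMeasure_zero : IsIrreducibilityMeasure κ 0 :=
  fun _ _ h => absurd h (lt_irrefl 0)

namespace IsIrreducibilityMeasure

lemma of_absolutelyContinuous {μ ν : Measure S} (hν : IsIrreducibilityMeasure κ ν)
    (h : μ ≪ ν) : IsIrreducibilityMeasure κ μ :=
  fun A hA hpos => hν A hA (pos_iff_ne_zero.2 fun hA0 => hpos.ne' (h hA0))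

lemma potentialMeasure {φ : Measure S} (hφ : IsIrreducibilityMeasure κ φ) :
    IsIrreducibilityMeasure κ (_root_.potentialMeasure κ φ) := by
  intro A hA hpos x
  have hreach : 0 < φ (reachSet κ A) :=
    pos_iff_ne_zero.2 ((potentialMeasure_apply_eq_zero_iff hA).not.1 hpos.ne')
  obtain ⟨m, hm, hmx⟩ := hφ _ (measurableSet_reachSet hA) hreach x
  obtain ⟨n, hn⟩ := exists_kpow_add_pos hA hmx
  exact ⟨n + m, by omega, hn⟩

lemma absolutelyContinuous_potentialMeasure {μ φ : Measure S}
    (hμ : IsIrreducibilityMeasure κ μ) (hφ : φ ≠ 0) : μ ≪ _root_.potentialMeasure κ φ := by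
  refine Measure.AbsolutelyContinuous.mk fun A hA hA0 => ?_
  obtain ⟨x, hx⟩ := exists_notMem_reachSet_of_potentialMeasure_eq_zero hφ hA hA0
  by_contra hμA
  obtain ⟨n, -, hn⟩ := hμ A hA (pos_iff_ne_zero.2 hμA) x
  exact hx ⟨n, hn⟩

lemma measure_reachSet_eq_zero {ψ : Measure S} (hψ : IsIrreducibilityMeasure κ ψ)
    {A : Set S} (hA : MeasurableSet A) {x : S} (hx : x ∉ reachSet κ A) :
    ψ (reachSet κ A) = 0 := by
  by_contra hpos
  obtain ⟨m, -, hm⟩ := hψ _ (measurableSet_reachSet hA) (pos_iff_ne_zero.2 hpos) x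
  obtain ⟨n, hn⟩ := exists_kpow_add_pos hA hm
  exact hx ⟨_, hn⟩

end IsIrreducibilityMeasure

end

theorem exists_maximal_irreducibility_measure_general
    {S : Type*} [MeasurableSpace S] (κ : Kernel S S) :
    ∃ ψ : Measure S,
      IsIrreducibilityMeasure κ ψ ∧
      (∀ μ : Measure S, IsIrreducibilityMeasure κ μ ↔ μ ≪ ψ) ∧
      (∀ A : Set S, MeasurableSet A → ψ A = 0 →
        ψ {x : S | ∃ n : ℕ, 1 ≤ n ∧ 0 < kpow κ n x A} = 0) := by
  by_cases h : ∃ φ : Measure S, IsIrreducibilityMeasure κ φ ∧ φ ≠ 0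
  · obtain ⟨φ, hφ, hφ0⟩ := h
    have hψ := hφ.potentialMeasure
    refine ⟨potentialMeasure κ φ, hψ,
      fun μ => ⟨fun hμ => IsIrreducibilityMeasure.absolutelyContinuous_potentialMeasure hμ hφ0,
        hψ.of_absolutelyContinuous⟩, fun A hA hA0 => ?_⟩
    obtain ⟨x, hx⟩ := exists_notMem_reachSet_of_potentialMeasure_eq_zero hφ0 hA hA0
    refine measure_mono_null ?_ (hψ.measure_reachSet_eq_zero hA hx)
    exact fun _ ⟨n, _, hn⟩ => ⟨n, hn⟩
  · push Not at h
    refine ⟨0, isIrreducibilityMeasure_zero,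
      fun μ => ⟨fun hμ => by rw [h μ hμ], isIrreducibilityMeasure_zero.of_absolutelyContinuous⟩,
      fun _ _ _ => rfl⟩

theorem exists_maximal_irreducibility_measure
    {S : Type*} [MeasurableSpace S] (κ : Kernel S S) [IsMarkovKernel κ]
    (φ : Measure S) (hφ : IsIrreducibilityMeasure κ φ) :
    ∃ ψ : Measure S,
      IsIrreducibilityMeasure κ ψ ∧
      (∀ μ : Measure S, IsIrreducibilityMeasure κ μ ↔ μ ≪ ψ) ∧
      (∀ A : Set S, MeasurableSet A → ψ A = 0 →
        ψ {x : S | ∃ n : ℕ, 1 ≤ n ∧ 0 < kpow κ n x A} = 0) :=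
  exists_maximal_irreducibility_measure_general κ
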